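/- Let C be a coalgebra over a field k and let π : C → C/I₁(C) be the quotient linear map. Then the lazy quotient coalgebra C^[1] = C/I₁(C) is cocommutative: for every x ∈ C, (π ⊗ π)(Δ(x)) = (π ⊗ π)(τ(Δ(x))), where τ : C ⊗ C → C ⊗ C is the flip. -/

import Mathlib

/-!
Write `t = Δx − τΔx`. Contracting `t` against a linear form `φ` on the first factor gives
`φ(x₁)·x₂ − φ(x₂)·x₁ ∈ I₁(C)`, so every such contraction of `(id ⊗ π) t` vanishes. As `C` is free,
a tensor in `C ⊗ V` is determined by these contractions, hence `(id ⊗ π) t = 0`, and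
`π ⊗ π = (π ⊗ id) ∘ (id ⊗ π)` kills `t`.
-/

open TensorProduct

/-- `I₁(C)`: the subspace of a coalgebra `C` spanned by the elements
`φ(x₁)·x₂ − φ(x₂)·x₁` for `x ∈ C` and linear forms `φ : C → k`. -/
noncomputable def lazySubspace (k : Type*) [Field k] (C : Type*)
    [AddCommGroup C] [Module k C] [Coalgebra k C] : Submodule k C :=
  Submodule.span k {y : C | ∃ (x : C) (φ : C →ₗ[k] k),
    y = (TensorProduct.lid k C)
          (TensorProduct.map φ LinearMap.id (Coalgebra.comul x))
      - (TensorProduct.rid k C)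
          (TensorProduct.map LinearMap.id φ (Coalgebra.comul x))}

theorem TensorProduct.eq_zero_of_forall_lid_rTensor_eq_zero {R M N : Type*} [CommSemiring R]
    [AddCommMonoid M] [Module R M] [Module.Free R M] [AddCommMonoid N] [Module R N]
    (u : M ⊗[R] N) (h : ∀ φ : Module.Dual R M, TensorProduct.lid R N (φ.rTensor N u) = 0) :
    u = 0 := by
  let b := Module.Free.chooseBasis R M
  apply (equivFinsuppOfBasisLeft b).injective
  ext i
  simpa [equivFinsuppOfBasisLeft_apply] using h (b.coord i)

theorem lid_map_comul_sub_comm_mem_lazySubspace (k : Type*) [Field k] (C : Type*)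
    [AddCommGroup C] [Module k C] [Coalgebra k C] (x : C) (φ : C →ₗ[k] k) :
    TensorProduct.lid k C (TensorProduct.map φ LinearMap.id
        (Coalgebra.comul (R := k) x - TensorProduct.comm k C C (Coalgebra.comul x)))
      ∈ lazySubspace k C := by
  rw [map_sub, map_sub, map_comm, lid_comm]
  exact Submodule.subset_span ⟨x, φ, rfl⟩

theorem lazyQuotient_cocommutative (k : Type*) [Field k] (C : Type*)
    [AddCommGroup C] [Module k C] [Coalgebra k C] :
    ∀ x : C,
      TensorProduct.map (lazySubspace k C).mkQ (lazySubspace k C).mkQ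
          (Coalgebra.comul (R := k) x)
        = TensorProduct.map (lazySubspace k C).mkQ (lazySubspace k C).mkQ
            ((TensorProduct.comm k C C) (Coalgebra.comul (R := k) x)) := by
  intro x
  set π := (lazySubspace k C).mkQ
  set t := Coalgebra.comul (R := k) x - TensorProduct.comm k C C (Coalgebra.comul x)
  rw [← sub_eq_zero, ← map_sub, ← LinearMap.rTensor_comp_lTensor, LinearMap.comp_apply]
  suffices π.lTensor C t = 0 by rw [this, map_zero]
  refine TensorProduct.eq_zero_of_forall_lid_rTensor_eq_zero _ fun φ => ?_
  have contract_eq : TensorProduct.lid k _ (TensorProduct.map φ π t)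
      = π (TensorProduct.lid k C (TensorProduct.map φ LinearMap.id t)) :=
    congr($(CoassocSimps.lid_comp_map φ π) t)
  rw [← LinearMap.comp_apply (φ.rTensor _), LinearMap.rTensor_comp_lTensor, contract_eq,
    Submodule.mkQ_apply, Submodule.Quotient.mk_eq_zero]
  exact lid_map_comul_sub_comm_mem_lazySubspace k C x φ
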